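/- Let H be a hb-graph on Fin n with hb-edges e_1, …, e_p of m-cardinalities ρ_k satisfying 1 ≤ ρ_k ≤ r, where r ≥ 2 is the m-range of H, and let A_sil be the e-adjacency hypermatrix of its silo-uniformized hb-graph. Then for every original vertex j : Fin n, Σ_{t : t(0) = j} A_sil(t) = deg_m(j) = Σ_k e_k(j); that is, the m-degree of every original vertex is retrieved as the sum of the entries of A_sil over all tuples whose first coordinate is that vertex. -/

import Mathlib

/-!
A tuple starting with `a` realizes `f` exactly when its tail realizes `f` with one copy of `a`
removed. Splitting on the first coordinate therefore gives, by induction on the length, the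
multinomial count `#{t : Fin m → V | t realizes f} · ∏ (f v)! = m!` whenever `∑ f = m`, and the
tuples of length `m + 1` starting with `a` number `f a · m! / ∏ (f v)!`. The null vertices give
every silo hb-edge m-cardinality `r`, so the tuples starting with `j` that realize `ê_k` carry
total weight `ê_k(j) = e_k(j)`.
-/

/-- The hb-edges of the silo-uniformized hb-graph: the original multiplicities on
the original vertices `Sum.inl i`, and multiplicity `r − ρ_k` on the null vertex
`N_s = Sum.inr s` (where `N_s` is labelled `(s : ℕ) + 1 ∈ {1, …, r−1}`) exactly
when the label equals the m-cardinality `ρ_k = Σ_j e_k(j)` of the hb-edge. -/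
def siloEdge (n p r : ℕ) (e : Fin p → Fin n → ℕ) (k : Fin p) :
    Fin n ⊕ Fin (r - 1) → ℕ
  | Sum.inl i => e k i
  | Sum.inr s => if (s : ℕ) + 1 = ∑ j, e k j then r - ∑ j, e k j else 0

/-- The e-adjacency hypermatrix of the silo-uniformized hb-graph:
`A_sil(t) = Σ_k (∏_v ê_k(v)!)/(r−1)! · [t realizes ê_k]`. -/
noncomputable def Asil (n p r : ℕ) (e : Fin p → Fin n → ℕ)
    (t : Fin r → Fin n ⊕ Fin (r - 1)) : ℝ :=
  ∑ k, if ∀ v, (Finset.univ.filter (fun s => t s = v)).card = siloEdge n p r e k v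
       then ((∏ v, (siloEdge n p r e k v).factorial : ℕ) : ℝ) / (r - 1).factorial
       else 0

open Finset Function Nat

section Realizes

variable {V : Type*} [DecidableEq V]

def Realizes {m : ℕ} (t : Fin m → V) (f : V → ℕ) : Prop :=
  ∀ v, #{s | t s = v} = f v

lemma card_filter_cons_eq {m : ℕ} (a : V) (t : Fin m → V) (v : V) :
    #{s | (Fin.cons a t : Fin (m + 1) → V) s = v} =
      #{s | t s = v} + if v = a then 1 else 0 := by
  rw [Fin.card_filter_univ_succ]
  by_cases h : v = a
  · simp [h]
  · simp [h, Ne.symm h]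

lemma realizes_cons_iff {m : ℕ} {a : V} {t : Fin m → V} {f : V → ℕ} :
    Realizes (Fin.cons a t : Fin (m + 1) → V) f ↔
      0 < f a ∧ Realizes t (update f a (f a - 1)) := by
  simp only [Realizes, card_filter_cons_eq, update_apply]
  constructor
  · intro h
    refine ⟨by have := h a; simp only [if_pos] at this; omega, fun v => ?_⟩
    have := h v
    split_ifs at this ⊢ with hv <;> [subst hv; skip] <;> omega
  · rintro ⟨ha, h⟩ v
    have := h v
    split_ifs at this ⊢ with hv <;> [subst hv; skip] <;> omega

variable [Fintype V]

instance {m : ℕ} (t : Fin m → V) (f : V → ℕ) : Decidable (Realizes t f) :=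
  inferInstanceAs (Decidable (∀ v, #{s | t s = v} = f v))

lemma card_filter_head_eq {m : ℕ} (a : V) (P : (Fin (m + 1) → V) → Prop) [DecidablePred P] :
    #{t | t 0 = a ∧ P t} = #{t : Fin m → V | P (Fin.cons a t)} := by
  refine card_nbij' Fin.tail (fun t => (Fin.cons a t : Fin (m + 1) → V)) ?_ ?_ ?_ ?_
  · intro t ht
    obtain ⟨rfl, ht⟩ : t 0 = a ∧ P t := by simpa using ht
    simpa using ht
  · intro t ht
    simp_all
  · intro t ht
    obtain ⟨rfl, -⟩ : t 0 = a ∧ P t := by simpa using ht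
    simp
  · intro t _
    simp

lemma sum_update_pred_add_one {f : V → ℕ} {a : V} (ha : 0 < f a) :
    ∑ v, update f a (f a - 1) v + 1 = ∑ v, f v := by
  rw [sum_update_of_mem (mem_univ a), sdiff_singleton_eq_erase,
    ← add_sum_erase univ f (mem_univ a)]
  omega

lemma prod_factorial_eq_mul_prod_factorial_update {f : V → ℕ} {a : V} (ha : 0 < f a) :
    ∏ v, (f v)! = f a * ∏ v, (update f a (f a - 1) v)! := by
  simp_rw [apply_update (fun _ k => k !) f a (f a - 1)]
  rw [prod_update_of_mem (mem_univ a), sdiff_singleton_eq_erase,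
    ← mul_prod_erase univ (fun v => (f v)!) (mem_univ a), ← mul_assoc,
    Nat.mul_factorial_pred ha.ne']

lemma card_head_realizes_mul_prod_factorial_eq {m : ℕ} (f : V → ℕ) (a : V) :
    #{t : Fin (m + 1) → V | t 0 = a ∧ Realizes t f} * ∏ v, (f v)! =
      f a * (#{t : Fin m → V | Realizes t (update f a (f a - 1))} *
        ∏ v, (update f a (f a - 1) v)!) := by
  rw [card_filter_head_eq]
  simp_rw [realizes_cons_iff]
  rcases (f a).eq_zero_or_pos with ha | ha
  · simp [ha]
  · simp only [ha, true_and]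
    rw [prod_factorial_eq_mul_prod_factorial_update ha]
    ring

lemma card_realizes_mul_prod_factorial {m : ℕ} {f : V → ℕ} (hf : ∑ v, f v = m) :
    #{t : Fin m → V | Realizes t f} * ∏ v, (f v)! = m ! := by
  induction m generalizing f with
  | zero =>
    have hf0 : ∀ v, f v = 0 := by simpa using hf
    have hall : ∀ t : Fin 0 → V, Realizes t f := fun t v => by simp [hf0]
    simp [hall, hf0]
  | succ m ih =>
    rw [card_eq_sum_card_fiberwise (f := fun t => t 0) (t := univ) (fun _ _ => mem_univ _),
      sum_mul]
    simp_rw [filter_filter, and_comm (a := Realizes _ f)]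
    calc ∑ a, #{t : Fin (m + 1) → V | t 0 = a ∧ Realizes t f} * ∏ v, (f v)!
        = ∑ a, f a * m ! := by
          refine sum_congr rfl fun a _ => ?_
          rw [card_head_realizes_mul_prod_factorial_eq]
          rcases (f a).eq_zero_or_pos with ha | ha
          · simp [ha]
          · rw [ih (by have := sum_update_pred_add_one ha; omega)]
      _ = (m + 1)! := by rw [← sum_mul, hf, Nat.factorial_succ]

lemma card_head_realizes_mul_prod_factorial {m : ℕ} {f : V → ℕ} (hf : ∑ v, f v = m + 1)
    (a : V) : #{t : Fin (m + 1) → V | t 0 = a ∧ Realizes t f} * ∏ v, (f v)! = f a * m ! := by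
  rw [card_head_realizes_mul_prod_factorial_eq]
  rcases (f a).eq_zero_or_pos with ha | ha
  · simp [ha]
  · rw [card_realizes_mul_prod_factorial (by have := sum_update_pred_add_one ha; omega)]

end Realizes

section Silo

variable {n p r : ℕ} {e : Fin p → Fin n → ℕ} {k : Fin p}

lemma sum_siloEdge_inr (hk : 1 ≤ ∑ j, e k j) :
    ∑ s : Fin (r - 1), siloEdge n p r e k (Sum.inr s) = r - ∑ j, e k j := by
  simp only [siloEdge]
  rw [Fin.sum_univ_eq_sum_range (fun i => if i + 1 = ∑ j, e k j then r - ∑ j, e k j else 0)]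
  simp_rw [show ∀ i, (i + 1 = ∑ j, e k j) ↔ (i = ∑ j, e k j - 1) from fun i => by omega]
  rw [sum_ite_eq' (range (r - 1))]
  simp only [mem_range]
  split_ifs <;> omega

lemma sum_siloEdge (hlo : 1 ≤ ∑ j, e k j) (hub : ∑ j, e k j ≤ r) :
    ∑ v, siloEdge n p r e k v = r := by
  rw [Fintype.sum_sum_type, sum_siloEdge_inr hlo]
  exact Nat.add_sub_cancel' hub

end Silo

/-- For a hb-graph on `Fin n` with hb-edges of m-cardinalities `ρ_k` satisfying
`1 ≤ ρ_k ≤ r`, where `r ≥ 2` is the m-range, and for every original vertex `j`,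
the sum of the entries of the silo e-adjacency hypermatrix over all tuples whose
first coordinate is `j` equals the m-degree `deg_m(j) = Σ_k e_k(j)`. -/
theorem stmt8 (n p r : ℕ) (hr : 2 ≤ r) (e : Fin p → Fin n → ℕ)
    (hlo : ∀ k, 1 ≤ ∑ j, e k j) (hub : ∀ k, ∑ j, e k j ≤ r)
    (j : Fin n) :
    ∑ t ∈ Finset.univ.filter
        (fun t : Fin r → Fin n ⊕ Fin (r - 1) => t ⟨0, by omega⟩ = Sum.inl j),
      Asil n p r e t = ∑ k, (e k j : ℝ) := by
  obtain ⟨m, rfl⟩ : ∃ m, r = m + 1 := ⟨r - 1, by omega⟩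
  simp only [Asil]
  rw [sum_comm]
  refine sum_congr rfl fun k _ => ?_
  rw [← sum_filter, filter_filter, sum_const, nsmul_eq_mul, mul_div_assoc',
    div_eq_iff (by positivity)]
  exact_mod_cast card_head_realizes_mul_prod_factorial (sum_siloEdge (hlo k) (hub k)) (Sum.inl j)
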